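/- Let H = (h_1, h_2, h_3) be a diagonal generator in the Pauli basis with h_1, h_2, h_3 ≥ 1, let C ∈ M_2 be positive semidefinite with Pauli expansion C = c_0 σ_0 + c_1 σ_1 + c_2 σ_2 + c_3 σ_3 (where c_i = (1/2) Tr(σ_i C) are real), and let C̃ be the diagonal matrix C̃ = c_0 σ_0 + (c_1^2 + c_2^2 + c_3^2)^{1/2} σ_3. Then for all t ≥ 0 and all q ≥ 1, ||e^{-tH}(C)||_q ≤ ||Δ_{e^{-t}}(C̃)||_q, where Δ_λ is the qubit depolarizing channel. -/

import Mathlib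

open scoped Matrix ComplexOrder

/- Common definitions: matrix algebras, Schatten norms, superoperator norms,
   tensor products of superoperators, complete positivity, semigroup generators. -/

namespace QHC

/-- The algebra of complex matrices indexed by `a`. -/
abbrev Mat (a : Type*) [Fintype a] [DecidableEq a] := Matrix a a ℂ

variable {a b : Type*} [Fintype a] [DecidableEq a] [Fintype b] [DecidableEq b]

/-- The Schatten `p`-norm `‖M‖_p = (Tr |M|^p)^{1/p}`, computed via the
eigenvalues of the positive semidefinite matrix `Mᴴ * M` (whose eigenvalues are the
squares of the singular values of `M`). -/
noncomputable def schatten (p : ℝ) (M : Mat a) : ℝ :=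
  (∑ i, (Matrix.posSemidef_conjTranspose_mul_self M).isHermitian.eigenvalues i ^ (p / 2)) ^ (1 / p)

/-- The normalized Schatten `p`-norm `|||M|||_p = (k⁻¹ Tr |M|^p)^{1/p}`. -/
noncomputable def nschatten (p : ℝ) (M : Mat a) : ℝ :=
  ((Fintype.card a : ℝ)⁻¹ *
    ∑ i, (Matrix.posSemidef_conjTranspose_mul_self M).isHermitian.eigenvalues i ^ (p / 2)) ^ (1 / p)

/-- The `p → q` operator norm of a superoperator, for the Schatten norms. -/
noncomputable def opNorm (p q : ℝ) (L : Mat a →ₗ[ℂ] Mat a) : ℝ :=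
  ⨆ M : Mat a, schatten q (L M) / schatten p M

/-- The `p → q` operator norm of a superoperator, for the normalized Schatten norms. -/
noncomputable def nOpNorm (p q : ℝ) (L : Mat a →ₗ[ℂ] Mat a) : ℝ :=
  ⨆ M : Mat a, nschatten q (L M) / nschatten p M

/-- A superoperator is self-adjoint w.r.t. the inner product `⟨A, B⟩ = Tr(Aᴴ B)`. -/
def IsSelfAdjointMap (L : Mat a →ₗ[ℂ] Mat a) : Prop :=
  ∀ A B : Mat a, (Aᴴ * L B).trace = ((L A)ᴴ * B).trace

/-- A superoperator is positive semidefinite: self-adjoint and `⟨M, L M⟩ ≥ 0` for all `M`. -/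
def IsPosSemidefMap (L : Mat a →ₗ[ℂ] Mat a) : Prop :=
  IsSelfAdjointMap L ∧ ∀ M : Mat a, 0 ≤ (Mᴴ * L M).trace

/-- The tensor product `L₁ ⊗ L₂` of two superoperators, acting on matrices indexed by
`a × b`, characterized by `(L₁ ⊗ L₂)(E_{ik} ⊗ E_{jl}) = L₁(E_{ik}) ⊗ L₂(E_{jl})` on the
basis of matrix units and extended linearly. -/
noncomputable def tensorMap (L₁ : Mat a →ₗ[ℂ] Mat a) (L₂ : Mat b →ₗ[ℂ] Mat b) :
    Mat (a × b) →ₗ[ℂ] Mat (a × b) where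
  toFun M := Matrix.of fun s t => ∑ i : a, ∑ k : a, ∑ j : b, ∑ l : b,
      L₁ (Matrix.single i k 1) s.1 t.1 *
        L₂ (Matrix.single j l 1) s.2 t.2 * M (i, j) (k, l)
  map_add' M N := by
    ext s t
    simp [Matrix.add_apply, mul_add, Finset.sum_add_distrib]
  map_smul' c M := by
    ext s t
    simp only [Matrix.smul_apply, smul_eq_mul, Matrix.of_apply, RingHom.id_apply,
      Finset.mul_sum]
    exact Finset.sum_congr rfl fun i _ => Finset.sum_congr rfl fun k _ =>
      Finset.sum_congr rfl fun j _ => Finset.sum_congr rfl fun l _ => by ring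

/-- The `n`-fold tensor product `L 1 ⊗ L 2 ⊗ ⋯ ⊗ L n` of qubit superoperators, acting on
`2^n × 2^n` matrices indexed by the boolean cube `Fin n → Fin 2`; it is characterized by
its action `⊗_j (L j)(E_{u_j v_j})` on the tensor basis of matrix units, extended linearly. -/
noncomputable def tensorPow {n : ℕ} (L : Fin n → (Mat (Fin 2) →ₗ[ℂ] Mat (Fin 2))) :
    Mat (Fin n → Fin 2) →ₗ[ℂ] Mat (Fin n → Fin 2) where
  toFun M := Matrix.of fun s t => ∑ u : Fin n → Fin 2, ∑ v : Fin n → Fin 2,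
      (∏ j, (L j) (Matrix.single (u j) (v j) 1) (s j) (t j)) * M u v
  map_add' M N := by
    ext s t
    simp [Matrix.add_apply, mul_add, Finset.sum_add_distrib]
  map_smul' c M := by
    ext s t
    simp only [Matrix.smul_apply, smul_eq_mul, Matrix.of_apply, RingHom.id_apply,
      Finset.mul_sum]
    exact Finset.sum_congr rfl fun u _ => Finset.sum_congr rfl fun v _ => by ring

/-- A superoperator `L` is completely positive if `id_m ⊗ L` preserves positive
semidefiniteness for every `m`. -/
def IsCompletelyPositive (L : Mat a →ₗ[ℂ] Mat a) : Prop :=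
  ∀ m : ℕ, ∀ A : Mat (Fin m × a), A.PosSemidef → ((tensorMap LinearMap.id L) A).PosSemidef

/-- A superoperator is trace preserving if it preserves traces. -/
def IsTracePreserving (L : Mat a →ₗ[ℂ] Mat a) : Prop :=
  ∀ M : Mat a, (L M).trace = M.trace

/-- A unital qubit channel: completely positive, trace preserving, and unital. -/
def IsUnitalQubitChannel (Φ : Mat (Fin 2) →ₗ[ℂ] Mat (Fin 2)) : Prop :=
  IsCompletelyPositive Φ ∧ IsTracePreserving Φ ∧ Φ 1 = 1

/-- The exponential `e^L` of a superoperator, defined via the exponential of its matrix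
in the standard basis of the matrix algebra. -/
noncomputable def expMap (L : Mat a →ₗ[ℂ] Mat a) : Mat a →ₗ[ℂ] Mat a :=
  Matrix.toLin (Matrix.stdBasis ℂ a a) (Matrix.stdBasis ℂ a a)
    (NormedSpace.exp (LinearMap.toMatrix (Matrix.stdBasis ℂ a a) (Matrix.stdBasis ℂ a a) L))

/-- The set `G` of generators: `H(I₂) = 0`, `H` self-adjoint and positive semidefinite. -/
def memG (H : Mat (Fin 2) →ₗ[ℂ] Mat (Fin 2)) : Prop :=
  H 1 = 0 ∧ IsPosSemidefMap H

/-- The set `G^{CP}` of generators in `G` whose semigroup `e^{-tH}` is completely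
positive for all `t ≥ 0`. -/
def memGCP (H : Mat (Fin 2) →ₗ[ℂ] Mat (Fin 2)) : Prop :=
  memG H ∧ ∀ t : ℝ, 0 ≤ t → IsCompletelyPositive (expMap ((-(t : ℂ)) • H))

/-- `‖H‖_min`, the infimum of the Rayleigh quotient of `H` over traceless nonzero matrices. -/
noncomputable def normMin (H : Mat (Fin 2) →ₗ[ℂ] Mat (Fin 2)) : ℝ :=
  ⨅ M : {M : Mat (Fin 2) // M.trace = 0 ∧ M ≠ 0},
    ((M.1ᴴ * H M.1).trace).re / ((M.1ᴴ * M.1).trace).re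

/-- The set `G^{CP}_1` of unit-rate generators. -/
def memGCP1 (H : Mat (Fin 2) →ₗ[ℂ] Mat (Fin 2)) : Prop :=
  memGCP H ∧ normMin H = 1

/-- The Pauli matrices `σ₀ = I₂, σ₁, σ₂, σ₃`. -/
noncomputable def pauli : Fin 4 → Mat (Fin 2) :=
  ![1, !![0, 1; 1, 0], !![0, -Complex.I; Complex.I, 0], !![1, 0; 0, -1]]

/-- The qubit depolarizing channel `Δ_λ(M) = λ M + ((1-λ)/2) Tr(M) I₂`. -/
noncomputable def depol (l : ℝ) : Mat (Fin 2) →ₗ[ℂ] Mat (Fin 2) where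
  toFun M := (l : ℂ) • M + (((1 - l : ℝ) : ℂ) / 2 * M.trace) • 1
  map_add' M N := by
    simp only [Matrix.trace_add, mul_add, add_smul, smul_add]
    abel
  map_smul' c M := by
    simp only [Matrix.trace_smul, smul_eq_mul, smul_smul, smul_add, RingHom.id_apply]
    rw [mul_left_comm]
    ring_nf

/-- The uniform generator `H_u(M) = M - (1/2) Tr(M) I₂`. -/
noncomputable def uniformGen : Mat (Fin 2) →ₗ[ℂ] Mat (Fin 2) where
  toFun M := M - (M.trace / 2) • 1
  map_add' M N := by
    simp only [Matrix.trace_add, add_div, add_smul]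
    abel
  map_smul' c M := by
    simp only [Matrix.trace_smul, smul_eq_mul, RingHom.id_apply, smul_sub, smul_smul,
      mul_div_assoc]

/-- The matrix `f(A)` obtained by applying `f : ℝ → ℝ` to a Hermitian matrix `A` via the
spectral decomposition (functional calculus). -/
noncomputable def herFun (A : Mat a) (hA : A.IsHermitian) (f : ℝ → ℝ) : Mat a :=
  (hA.eigenvectorUnitary : Mat a) *
    Matrix.diagonal (fun i => (f (hA.eigenvalues i) : ℂ)) *
    (hA.eigenvectorUnitary : Mat a)ᴴ

/-- The real power `A^r` of a positive semidefinite matrix, via functional calculus. -/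
noncomputable def posPow (A : Mat a) (hA : A.IsHermitian) (r : ℝ) : Mat a :=
  herFun A hA (fun x => x ^ r)

/-- The diagonal qubit generator `H = (h₁, h₂, h₃)` in the Pauli basis:
`H(σ₀) = 0` and `H(σᵢ) = hᵢ σᵢ` for `i = 1,2,3`. -/
noncomputable def diagGen (h₁ h₂ h₃ : ℝ) : Mat (Fin 2) →ₗ[ℂ] Mat (Fin 2) where
  toFun M := ((h₁ : ℂ) * ((pauli 1 * M).trace / 2)) • pauli 1
    + ((h₂ : ℂ) * ((pauli 2 * M).trace / 2)) • pauli 2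
    + ((h₃ : ℂ) * ((pauli 3 * M).trace / 2)) • pauli 3
  map_add' M N := by
    simp only [Matrix.mul_add, Matrix.trace_add, add_div, mul_add, add_smul]
    abel
  map_smul' c M := by
    simp only [Matrix.mul_smul, Matrix.trace_smul, smul_eq_mul, RingHom.id_apply, smul_add,
      smul_smul]
    ring_nf

end QHC

/-! Both sides have the form `c₀ σ₀ + a₁ σ₁ + a₂ σ₂ + a₃ σ₃`, whose singular values are
`|c₀ ± ‖a‖|` with `‖a‖ = √(a₁² + a₂² + a₃²)`. Hence `‖·‖_q^q = |c₀ + ‖a‖|^q + |c₀ - ‖a‖|^q`,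
which is nondecreasing in `‖a‖` because `x ↦ |x|^q` is convex. The semigroup `e^{-tH}` fixes
`σ₀` and scales each `σᵢ` by `e^{-t hᵢ} ≤ e^{-t}`, so it shrinks `‖a‖` to at most `e^{-t} ‖c‖`,
which is exactly the length for `Δ_{e^{-t}}(C̃)`. -/

open NormedSpace

namespace Matrix

variable {ι : Type*} [Fintype ι] [DecidableEq ι]

theorem exp_series_hasSum_exp (T : Matrix ι ι ℂ) :
    HasSum (fun n : ℕ => (n.factorial : ℂ)⁻¹ • T ^ n) (exp T) := by
  let : SeminormedRing (Matrix ι ι ℂ) := Matrix.linftyOpSemiNormedRing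
  let : NormedRing (Matrix ι ι ℂ) := Matrix.linftyOpNormedRing
  let : NormedAlgebra ℂ (Matrix ι ι ℂ) := Matrix.linftyOpNormedAlgebra
  exact exp_series_hasSum_exp' T

theorem exp_mulVec_of_mulVec_eq_smul {T : Matrix ι ι ℂ} {x : ι → ℂ} {μ : ℂ}
    (h : T *ᵥ x = μ • x) : exp T *ᵥ x = Complex.exp μ • x := by
  have hpow (n : ℕ) : T ^ n *ᵥ x = μ ^ n • x := by
    induction n with
    | zero => simp
    | succ n ih => rw [pow_succ', ← mulVec_mulVec, ih, mulVec_smul, h, smul_smul, ← pow_succ]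
  let applyTo : Matrix ι ι ℂ →L[ℂ] (ι → ℂ) := LinearMap.toContinuousLinearMap
    { toFun := (· *ᵥ x), map_add' := (add_mulVec · · x), map_smul' := (smul_mulVec · · x) }
  have hT : HasSum (fun n : ℕ => (n.factorial : ℂ)⁻¹ • μ ^ n • x) (exp T *ᵥ x) := by
    simpa [applyTo, hpow] using (exp_series_hasSum_exp T).mapL applyTo
  have hμ : HasSum (fun n : ℕ => (n.factorial : ℂ)⁻¹ • μ ^ n • x) (Complex.exp μ • x) := by
    simpa [smul_smul, ← Complex.exp_eq_exp_ℂ] using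
      (exp_series_hasSum_exp' (𝕂 := ℂ) μ).smul_const x
  exact hT.unique hμ

end Matrix

theorem Matrix.IsHermitian.sum_eigenvalues_fin_two {𝕜 : Type*} [RCLike 𝕜]
    {A : Matrix (Fin 2) (Fin 2) 𝕜} (hA : A.IsHermitian) {α β : ℝ}
    (htr : A.trace = α + β) (hdet : A.det = α * β) (f : ℝ → ℝ) :
    ∑ i, f (hA.eigenvalues i) = f α + f β := by
  have hsum : hA.eigenvalues 0 + hA.eigenvalues 1 = α + β := by
    apply RCLike.ofReal_injective (K := 𝕜)
    simpa [Fin.sum_univ_two] using hA.trace_eq_sum_eigenvalues.symm.trans htr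
  have hprod : hA.eigenvalues 0 * hA.eigenvalues 1 = α * β := by
    apply RCLike.ofReal_injective (K := 𝕜)
    simpa [Fin.prod_univ_two] using hA.det_eq_prod_eigenvalues.symm.trans hdet
  have hroot : (hA.eigenvalues 0 - α) * (hA.eigenvalues 0 - β) = 0 := by
    linear_combination hA.eigenvalues 0 * hsum - hprod
  rw [Fin.sum_univ_two]
  rcases mul_eq_zero.mp hroot with h | h
  · rw [show hA.eigenvalues 0 = α by linarith, show hA.eigenvalues 1 = β by linarith]
  · rw [show hA.eigenvalues 0 = β by linarith, show hA.eigenvalues 1 = α by linarith, add_comm]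

open Set in
theorem convexOn_abs_rpow {q : ℝ} (hq : 1 ≤ q) : ConvexOn ℝ univ fun x : ℝ => |x| ^ q := by
  have himage : (|·|) '' univ = Ici (0 : ℝ) := by
    ext x
    exact ⟨by rintro ⟨y, -, rfl⟩; exact abs_nonneg y, fun hx => ⟨x, trivial, abs_of_nonneg hx⟩⟩
  refine ConvexOn.comp (g := (· ^ q)) ?_ convexOn_univ_norm ?_ <;> rw [himage]
  · exact convexOn_rpow hq
  · exact Real.monotoneOn_rpow_Ici_of_exponent_nonneg (by linarith)

theorem ConvexOn.monotoneOn_apply_add_add_apply_sub {f : ℝ → ℝ} (hf : ConvexOn ℝ Set.univ f)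
    (c : ℝ) : MonotoneOn (fun s => f (c + s) + f (c - s)) (Set.Ici 0) := by
  intro s (hs : 0 ≤ s) s' _ hss'
  obtain rfl | hs'0 := eq_or_lt_of_le (hs.trans hss')
  · rw [le_antisymm hss' hs]
  set θ := (s' + s) / (2 * s')
  have hθ0 : 0 ≤ θ := by positivity
  have hθ1 : 0 ≤ 1 - θ := by
    rw [sub_nonneg, div_le_one (by positivity)]; linarith
  -- `c ± s` are the same two convex combinations of `c ± s'`, with the weights swapped
  have hplus := hf.2 (x := c + s') (y := c - s') trivial trivial hθ0 hθ1 (add_sub_cancel θ 1)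
  have hminus := hf.2 (x := c + s') (y := c - s') trivial trivial hθ1 hθ0 (sub_add_cancel 1 θ)
  have e₁ : θ • (c + s') + (1 - θ) • (c - s') = c + s := by
    simp only [θ, smul_eq_mul]; field_simp; ring
  have e₂ : (1 - θ) • (c + s') + θ • (c - s') = c - s := by
    simp only [θ, smul_eq_mul]; field_simp; ring
  rw [e₁] at hplus
  rw [e₂] at hminus
  simp only [smul_eq_mul] at hplus hminus ⊢
  linarith

theorem Real.sqrt_sum_sq_mul_le {l l₁ l₂ l₃ : ℝ} (h₁ : |l₁| ≤ l) (h₂ : |l₂| ≤ l) (h₃ : |l₃| ≤ l)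
    (c₁ c₂ c₃ : ℝ) :
    √((l₁ * c₁) ^ 2 + (l₂ * c₂) ^ 2 + (l₃ * c₃) ^ 2) ≤ l * √(c₁ ^ 2 + c₂ ^ 2 + c₃ ^ 2) := by
  have hl : 0 ≤ l := (abs_nonneg l₁).trans h₁
  have hsq {x : ℝ} (hx : |x| ≤ l) (y : ℝ) : (x * y) ^ 2 ≤ l ^ 2 * y ^ 2 := by
    rw [mul_pow, ← sq_abs x]
    exact mul_le_mul_of_nonneg_right (pow_le_pow_left₀ (abs_nonneg x) hx 2) (sq_nonneg y)
  rw [← Real.sqrt_sq hl, ← Real.sqrt_mul (sq_nonneg l)]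
  apply Real.sqrt_le_sqrt
  linarith [hsq h₁ c₁, hsq h₂ c₂, hsq h₃ c₃]

namespace QHC

theorem expMap_apply_of_eq_smul {a : Type*} [Fintype a] [DecidableEq a]
    {L : Mat a →ₗ[ℂ] Mat a} {v : Mat a} {μ : ℂ} (h : L v = μ • v) :
    expMap L v = Complex.exp μ • v := by
  let b := Matrix.stdBasis ℂ a a
  have hT : LinearMap.toMatrix b b L *ᵥ b.repr v = μ • ⇑(b.repr v) := by
    rw [LinearMap.toMatrix_mulVec_repr, h, map_smul, Finsupp.coe_smul]
  refine b.repr.injective (DFunLike.coe_injective ?_)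
  rw [← LinearMap.toMatrix_mulVec_repr b b, expMap, LinearMap.toMatrix_toLin,
    Matrix.exp_mulVec_of_mulVec_eq_smul hT, map_smul, Finsupp.coe_smul]

theorem expMap_neg_smul_apply_of_eq_smul {a : Type*} [Fintype a] [DecidableEq a]
    {H : Mat a →ₗ[ℂ] Mat a} {v : Mat a} {h : ℝ} (hv : H v = (h : ℂ) • v) (t : ℝ) :
    expMap ((-(t : ℂ)) • H) v = (Real.exp (-(t * h)) : ℂ) • v := by
  rw [expMap_apply_of_eq_smul (μ := (-(t * h) : ℝ)), Complex.ofReal_exp]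
  rw [LinearMap.smul_apply, hv, smul_smul]
  push_cast
  ring_nf

noncomputable def pauliExpansion (c₀ a₁ a₂ a₃ : ℝ) : Mat (Fin 2) :=
  (c₀ : ℂ) • 1 + (a₁ : ℂ) • pauli 1 + (a₂ : ℂ) • pauli 2 + (a₃ : ℂ) • pauli 3

theorem pauliExpansion_eq (c₀ a₁ a₂ a₃ : ℝ) :
    pauliExpansion c₀ a₁ a₂ a₃ =
      !![(c₀ + a₃ : ℂ), a₁ - a₂ * Complex.I; a₁ + a₂ * Complex.I, c₀ - a₃] := by
  ext i j
  fin_cases i <;> fin_cases j <;> simp [pauliExpansion, pauli] <;> ring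

theorem schatten_pauliExpansion (q c₀ a₁ a₂ a₃ : ℝ) :
    schatten q (pauliExpansion c₀ a₁ a₂ a₃) =
      (|c₀ + √(a₁ ^ 2 + a₂ ^ 2 + a₃ ^ 2)| ^ q +
        |c₀ - √(a₁ ^ 2 + a₂ ^ 2 + a₃ ^ 2)| ^ q) ^ (1 / q) := by
  set s := √(a₁ ^ 2 + a₂ ^ 2 + a₃ ^ 2)
  have hs : s ^ 2 = a₁ ^ 2 + a₂ ^ 2 + a₃ ^ 2 := Real.sq_sqrt (by positivity)
  set M := pauliExpansion c₀ a₁ a₂ a₃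
  have htr : (Mᴴ * M).trace = ((c₀ + s) ^ 2 : ℝ) + ((c₀ - s) ^ 2 : ℝ) := by
    simp [M, pauliExpansion_eq, Matrix.trace_fin_two, Matrix.mul_apply, Complex.ext_iff, sq]
    exact ⟨by linear_combination (-2) * hs, by ring⟩
  have hdet : (Mᴴ * M).det = ((c₀ + s) ^ 2 : ℝ) * ((c₀ - s) ^ 2 : ℝ) := by
    rw [Matrix.det_mul, Matrix.det_conjTranspose]
    simp [M, pauliExpansion_eq, Matrix.det_fin_two, Complex.ext_iff, sq]
    exact ⟨by linear_combination (2 * c₀ ^ 2 - s ^ 2 - (a₁ ^ 2 + a₂ ^ 2 + a₃ ^ 2)) * hs, by ring⟩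
  have hsq (x : ℝ) : (x ^ 2) ^ (q / 2) = |x| ^ q := by
    rw [← sq_abs, ← Real.rpow_natCast_mul (abs_nonneg x)]
    congr 1
    ring
  have key := (Matrix.posSemidef_conjTranspose_mul_self M).isHermitian.sum_eigenvalues_fin_two
    (α := (c₀ + s) ^ 2) (β := (c₀ - s) ^ 2) htr hdet (· ^ (q / 2))
  rw [schatten, key, hsq, hsq]

theorem expMap_neg_smul_pauliExpansion {h₁ h₂ h₃ : ℝ} {H : Mat (Fin 2) →ₗ[ℂ] Mat (Fin 2)}
    (hH0 : H 1 = 0) (hH1 : H (pauli 1) = (h₁ : ℂ) • pauli 1)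
    (hH2 : H (pauli 2) = (h₂ : ℂ) • pauli 2) (hH3 : H (pauli 3) = (h₃ : ℂ) • pauli 3)
    (t c₀ c₁ c₂ c₃ : ℝ) :
    expMap ((-(t : ℂ)) • H) (pauliExpansion c₀ c₁ c₂ c₃) =
      pauliExpansion c₀ (Real.exp (-(t * h₁)) * c₁) (Real.exp (-(t * h₂)) * c₂)
        (Real.exp (-(t * h₃)) * c₃) := by
  have hH0' : H 1 = ((0 : ℝ) : ℂ) • 1 := by rw [hH0, Complex.ofReal_zero, zero_smul]
  simp only [pauliExpansion, map_add, map_smul, expMap_neg_smul_apply_of_eq_smul hH0',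
    expMap_neg_smul_apply_of_eq_smul hH1, expMap_neg_smul_apply_of_eq_smul hH2,
    expMap_neg_smul_apply_of_eq_smul hH3, smul_smul]
  push_cast
  rw [mul_zero, neg_zero, Complex.exp_zero, mul_one, mul_comm (c₁ : ℂ), mul_comm (c₂ : ℂ),
    mul_comm (c₃ : ℂ)]

theorem depol_pauliExpansion (l c₀ a₁ a₂ a₃ : ℝ) :
    depol l (pauliExpansion c₀ a₁ a₂ a₃) = pauliExpansion c₀ (l * a₁) (l * a₂) (l * a₃) := by
  ext i j
  fin_cases i <;> fin_cases j <;>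
    simp [depol, pauliExpansion_eq, Matrix.trace_fin_two] <;> ring

theorem schatten_exp_diag_le_depol_general
    (h₁ h₂ h₃ : ℝ) (hh₁ : 1 ≤ h₁) (hh₂ : 1 ≤ h₂) (hh₃ : 1 ≤ h₃)
    (H : Mat (Fin 2) →ₗ[ℂ] Mat (Fin 2)) (hH0 : H 1 = 0)
    (hH1 : H (pauli 1) = (h₁ : ℂ) • pauli 1)
    (hH2 : H (pauli 2) = (h₂ : ℂ) • pauli 2)
    (hH3 : H (pauli 3) = (h₃ : ℂ) • pauli 3)
    (c₀ c₁ c₂ c₃ : ℝ) (C : Mat (Fin 2))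
    (hCexp : C = (c₀ : ℂ) • 1 + (c₁ : ℂ) • pauli 1 + (c₂ : ℂ) • pauli 2 +
      (c₃ : ℂ) • pauli 3)
    (t : ℝ) (ht : 0 ≤ t) (q : ℝ) (hq : 1 ≤ q) :
    schatten q (expMap ((-(t : ℂ)) • H) C) ≤
      schatten q (depol (Real.exp (-t))
        ((c₀ : ℂ) • 1 + (↑(Real.sqrt (c₁ ^ 2 + c₂ ^ 2 + c₃ ^ 2)) : ℂ) • pauli 3)) := by
  set r := √(c₁ ^ 2 + c₂ ^ 2 + c₃ ^ 2)
  have hdecay {h : ℝ} (hh : 1 ≤ h) : |Real.exp (-(t * h))| ≤ Real.exp (-t) := by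
    rw [abs_of_pos (Real.exp_pos _), Real.exp_le_exp]
    nlinarith
  have hCtilde : (c₀ : ℂ) • 1 + (r : ℂ) • pauli 3 = pauliExpansion c₀ 0 0 r := by
    simp [pauliExpansion]
  have hr : √((Real.exp (-t) * 0) ^ 2 + (Real.exp (-t) * 0) ^ 2 + (Real.exp (-t) * r) ^ 2) =
      Real.exp (-t) * r := by
    rw [mul_zero, zero_pow two_ne_zero, zero_add, zero_add, Real.sqrt_sq (by positivity)]
  rw [show C = pauliExpansion c₀ c₁ c₂ c₃ from hCexp,
    expMap_neg_smul_pauliExpansion hH0 hH1 hH2 hH3, hCtilde, depol_pauliExpansion,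
    schatten_pauliExpansion, schatten_pauliExpansion, hr]
  refine Real.rpow_le_rpow (by positivity) ?_ (by positivity)
  exact (convexOn_abs_rpow hq).monotoneOn_apply_add_add_apply_sub c₀ (Real.sqrt_nonneg _)
    (by positivity : 0 ≤ Real.exp (-t) * r)
    (Real.sqrt_sum_sq_mul_le (hdecay hh₁) (hdecay hh₂) (hdecay hh₃) c₁ c₂ c₃)

/-- For a diagonal generator `H = (h₁, h₂, h₃)` with `hᵢ ≥ 1` and a positive semidefinite
`C = c₀σ₀ + c₁σ₁ + c₂σ₂ + c₃σ₃`, with `C̃ = c₀σ₀ + √(c₁² + c₂² + c₃²) σ₃`, one has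
`‖e^{-tH}(C)‖_q ≤ ‖Δ_{e^{-t}}(C̃)‖_q` for all `t ≥ 0` and `q ≥ 1`. -/
theorem schatten_exp_diag_le_depol
    (h₁ h₂ h₃ : ℝ) (hh₁ : 1 ≤ h₁) (hh₂ : 1 ≤ h₂) (hh₃ : 1 ≤ h₃)
    (H : Mat (Fin 2) →ₗ[ℂ] Mat (Fin 2)) (hH0 : H 1 = 0)
    (hH1 : H (pauli 1) = (h₁ : ℂ) • pauli 1)
    (hH2 : H (pauli 2) = (h₂ : ℂ) • pauli 2)
    (hH3 : H (pauli 3) = (h₃ : ℂ) • pauli 3)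
    (c₀ c₁ c₂ c₃ : ℝ) (C : Mat (Fin 2)) (hC : C.PosSemidef)
    (hCexp : C = (c₀ : ℂ) • 1 + (c₁ : ℂ) • pauli 1 + (c₂ : ℂ) • pauli 2 +
      (c₃ : ℂ) • pauli 3)
    (t : ℝ) (ht : 0 ≤ t) (q : ℝ) (hq : 1 ≤ q) :
    schatten q (expMap ((-(t : ℂ)) • H) C) ≤
      schatten q (depol (Real.exp (-t))
        ((c₀ : ℂ) • 1 + (↑(Real.sqrt (c₁ ^ 2 + c₂ ^ 2 + c₃ ^ 2)) : ℂ) • pauli 3)) :=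
  schatten_exp_diag_le_depol_general h₁ h₂ h₃ hh₁ hh₂ hh₃ H hH0 hH1 hH2 hH3 c₀ c₁ c₂ c₃ C hCexp t ht
    q hq

end QHC
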